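/- arXiv:2011.05557 — 3 statements merged into one kernel-verified Lean document; each statement's English description precedes it below -/
import Mathlib

section
/- Let G be a complete mixed graph (every pair of distinct vertices joined by exactly one edge, either directed or undirected). Define a directed cycle of G to be a cycle containing at least one directed edge whose undirected edges can be oriented so that all edges are consistently directed around the cycle. Then G contains a directed cycle if and only if G contains a directed triangle (a directed cycle of length 3). -/
/-!
Rotate a directed cycle so that it reads `v 0 → v 1 - ⋯ - v m - v 0`, with `v 0 → v 1`
directed. The edge between `v 0` and `v k` is directed `v 0 → v k` for `k = 1` but not for
`k = m`, since the cycle edge `v m - v 0` already occupies that pair. At a `k` where this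
switches off, completeness makes `v 0 → v k - v (k + 1) - v 0` a directed triangle.
-/

/-- A cycle of a mixed graph: a cyclic sequence of at least 3 distinct vertices
where each consecutive edge is either directed forward or undirected, with at
least one directed edge. -/
def HasDirCycle {V : Type*} (dir und : V → V → Prop) : Prop :=
  ∃ (n : ℕ), 3 ≤ n ∧ ∃ f : ZMod n → V, Function.Injective f ∧
    (∀ i : ZMod n, dir (f i) (f (i + 1)) ∨ und (f i) (f (i + 1))) ∧
    (∃ i : ZMod n, dir (f i) (f (i + 1)))

/-- A directed triangle of a mixed graph. -/
def HasDirTriangle {V : Type*} (dir und : V → V → Prop) : Prop :=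
  ∃ a b c : V, a ≠ b ∧ b ≠ c ∧ a ≠ c ∧
    (dir a b ∨ und a b) ∧ (dir b c ∨ und b c) ∧ (dir c a ∨ und c a) ∧
    (dir a b ∨ dir b c ∨ dir c a)

def IsCompleteMixedGraph {V : Type*} (dir und : V → V → Prop) : Prop :=
  ∀ u v : V, u ≠ v →
    (dir u v ∧ ¬ dir v u ∧ ¬ und u v) ∨
    (dir v u ∧ ¬ dir u v ∧ ¬ und u v) ∨
    (und u v ∧ ¬ dir u v ∧ ¬ dir v u)

theorem Nat.exists_and_not_succ_of_not {P : ℕ → Prop} {a b : ℕ} (hab : a ≤ b) (ha : P a)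
    (hb : ¬ P b) : ∃ k, a ≤ k ∧ k < b ∧ P k ∧ ¬ P (k + 1) := by
  induction b, hab using Nat.le_induction with
  | base => exact absurd ha hb
  | succ b hab ih =>
    by_cases hPb : P b
    · exact ⟨b, hab, b.lt_succ_self, hPb, hb⟩
    · obtain ⟨k, hak, hkb, hk⟩ := ih hPb
      exact ⟨k, hak, hkb.trans b.lt_succ_self, hk⟩

namespace IsCompleteMixedGraph

variable {V : Type*} {dir und : V → V → Prop}

theorem dir_or_und_of_not_dir (hG : IsCompleteMixedGraph dir und) {u v : V} (huv : u ≠ v)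
    (h : ¬ dir u v) : dir v u ∨ und v u := by
  rcases hG v u huv.symm with ⟨hvu, -⟩ | ⟨huv', -⟩ | ⟨hvu, -⟩
  exacts [Or.inl hvu, absurd huv' h, Or.inr hvu]

theorem not_dir_of_dir_or_und (hG : IsCompleteMixedGraph dir und) {u v : V} (huv : u ≠ v)
    (h : dir v u ∨ und v u) : ¬ dir u v := by
  rcases hG v u huv.symm with ⟨-, h', -⟩ | ⟨-, h', h''⟩ | ⟨-, -, h'⟩
  exacts [h', fun _ => h.elim h' h'', h']

theorem hasDirTriangle_of_closedWalk (hG : IsCompleteMixedGraph dir und) (v : ℕ → V) {m : ℕ}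
    (hm : 1 ≤ m) (hinj : Set.InjOn v (Set.Iic m))
    (hedge : ∀ k < m, dir (v k) (v (k + 1)) ∨ und (v k) (v (k + 1)))
    (hclose : dir (v m) (v 0) ∨ und (v m) (v 0)) (hdir : dir (v 0) (v 1)) :
    HasDirTriangle dir und := by
  have hne : ∀ a b, a ≤ m → b ≤ m → a ≠ b → v a ≠ v b :=
    fun a b ha hb hab h => hab (hinj (Set.mem_Iic.2 ha) (Set.mem_Iic.2 hb) h)
  have hlast : ¬ dir (v 0) (v m) :=
    hG.not_dir_of_dir_or_und (hne 0 m (by omega) le_rfl (by omega)) hclose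
  obtain ⟨k, hk1, hkm, hk, hk'⟩ :=
    Nat.exists_and_not_succ_of_not (P := fun k => dir (v 0) (v k)) hm hdir hlast
  have h0k' : v 0 ≠ v (k + 1) := hne 0 (k + 1) (by omega) (by omega) (by omega)
  refine ⟨v 0, v k, v (k + 1), hne 0 k (by omega) (by omega) (by omega),
    hne k (k + 1) (by omega) (by omega) (by omega), h0k', Or.inl hk, hedge k hkm,
    hG.dir_or_und_of_not_dir h0k' hk', Or.inl hk⟩

theorem hasDirTriangle_of_hasDirCycle (hG : IsCompleteMixedGraph dir und)
    (h : HasDirCycle dir und) : HasDirTriangle dir und := by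
  obtain ⟨n, hn, f, hinj, hedge, i, hi⟩ := h
  have hcast : ∀ k : ℕ, i + ((k + 1 : ℕ) : ZMod n) = i + k + 1 := fun k => by push_cast; ring
  refine hG.hasDirTriangle_of_closedWalk (fun k => f (i + k)) (m := n - 1) (by omega) ?_ ?_ ?_
    (by simpa using hi)
  · intro a ha b hb hab
    rw [Set.mem_Iic] at ha hb
    have := (ZMod.natCast_eq_natCast_iff' a b n).1 (add_left_cancel (hinj hab))
    rwa [Nat.mod_eq_of_lt (by omega), Nat.mod_eq_of_lt (by omega)] at this
  · intro k _
    simpa only [hcast] using hedge (i + k)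
  · have : i + ((n - 1 : ℕ) : ZMod n) + 1 = i := by
      rw [← hcast, Nat.sub_add_cancel (by omega), ZMod.natCast_self, add_zero]
    simpa [this] using hedge (i + ((n - 1 : ℕ) : ZMod n))

end IsCompleteMixedGraph

theorem HasDirTriangle.hasDirCycle {V : Type*} {dir und : V → V → Prop}
    (h : HasDirTriangle dir und) : HasDirCycle dir und := by
  obtain ⟨a, b, c, hab, hbc, hac, eab, ebc, eca, hd⟩ := h
  refine ⟨3, le_rfl, ![a, b, c], ?_, ?_, ?_⟩
  · intro x y hxy
    fin_cases x <;> fin_cases y <;> first | rfl | simp_all [eq_comm]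
  · intro x
    fin_cases x
    exacts [eab, ebc, eca]
  · rcases hd with h | h | h
    exacts [⟨0, h⟩, ⟨1, h⟩, ⟨2, h⟩]

theorem mixed_graph_directed_cycle_iff_directed_triangle_general {V : Type*}
    (dir und : V → V → Prop)
    (hcomplete : ∀ u v : V, u ≠ v →
      (dir u v ∧ ¬ dir v u ∧ ¬ und u v) ∨
      (dir v u ∧ ¬ dir u v ∧ ¬ und u v) ∨
      (und u v ∧ ¬ dir u v ∧ ¬ dir v u)) :
    HasDirCycle dir und ↔ HasDirTriangle dir und :=
  ⟨IsCompleteMixedGraph.hasDirTriangle_of_hasDirCycle hcomplete, HasDirTriangle.hasDirCycle⟩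

/-- A complete mixed graph contains a directed cycle iff it contains a directed
triangle. -/
theorem mixed_graph_directed_cycle_iff_directed_triangle {V : Type*} [Fintype V]
    (dir und : V → V → Prop)
    (hundsymm : ∀ u v, und u v → und v u)
    (hcomplete : ∀ u v : V, u ≠ v →
      (dir u v ∧ ¬ dir v u ∧ ¬ und u v) ∨
      (dir v u ∧ ¬ dir u v ∧ ¬ und u v) ∨
      (und u v ∧ ¬ dir u v ∧ ¬ dir v u)) :
    HasDirCycle dir und ↔ HasDirTriangle dir und :=
  mixed_graph_directed_cycle_iff_directed_triangle_general dir und hcomplete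
end

section
/- Let G be a complete mixed graph with no directed cycle. If vertices a and b are joined by an undirected edge, then for every other vertex c, the edges (a,c) and (b,c) have the same 'type': either both are directed toward c, both are directed away from c, or both are undirected. -/
/-! If `a - b` is undirected and `a → c` but not `b → c`, then `c → b` or `c - b`, so
`a → c → b - a` or `a → c - b - a` is a directed triangle; edges into `c` are symmetric, and
the undirected case is what remains. -/

theorem hasDirCycle_of_triangle {V : Type*} {dir und : V → V → Prop} {x y z : V}
    (hxy : x ≠ y) (hyz : y ≠ z) (hxz : x ≠ z)
    (h₁ : dir x y) (h₂ : dir y z ∨ und y z) (h₃ : dir z x ∨ und z x) :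
    HasDirCycle dir und := by
  refine ⟨3, le_rfl, ![x, y, z], ?_, ?_, 0, by simpa using h₁⟩
  · intro i j h
    fin_cases i <;> fin_cases j <;> simp_all <;> rfl
  · intro i
    fin_cases i
    exacts [Or.inl h₁, h₂, h₃]

section CompleteMixedGraph

variable {V : Type*} {dir und : V → V → Prop}
  (hcomplete : ∀ u v : V, u ≠ v →
    (dir u v ∧ ¬ dir v u ∧ ¬ und u v) ∨
    (dir v u ∧ ¬ dir u v ∧ ¬ und u v) ∨
    (und u v ∧ ¬ dir u v ∧ ¬ dir v u))
include hcomplete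

theorem und_symm_of_complete {u v : V} (hne : u ≠ v) (huv : und u v) : und v u := by
  have := hcomplete u v hne
  have := hcomplete v u hne.symm
  tauto

theorem dir_or_und_of_not_dir {u v : V} (huv : u ≠ v) (h : ¬ dir u v) :
    dir v u ∨ und v u := by
  rcases hcomplete u v huv with h' | h' | h'
  exacts [absurd h'.1 h, Or.inl h'.1, Or.inr (und_symm_of_complete hcomplete huv h'.1)]

variable (hnocyc : ¬ HasDirCycle dir und)
include hnocyc

theorem dir_out_of_und {a b c : V} (hab : a ≠ b) (hca : c ≠ a) (hcb : c ≠ b)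
    (hund : und a b) (hac : dir a c) : dir b c := by
  by_contra hbc
  exact hnocyc <| hasDirCycle_of_triangle hca.symm hcb hab hac
    (dir_or_und_of_not_dir hcomplete hcb.symm hbc)
    (Or.inr (und_symm_of_complete hcomplete hab hund))

theorem dir_in_of_und {a b c : V} (hab : a ≠ b) (hca : c ≠ a) (hcb : c ≠ b)
    (hund : und a b) (hca' : dir c a) : dir c b := by
  by_contra hcb'
  exact hnocyc <| hasDirCycle_of_triangle hca hab hcb hca' (Or.inr hund)
    (dir_or_und_of_not_dir hcomplete hcb hcb')

end CompleteMixedGraph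

theorem undirected_edge_same_type_general {V : Type*}
    (dir und : V → V → Prop)
    (hcomplete : ∀ u v : V, u ≠ v →
      (dir u v ∧ ¬ dir v u ∧ ¬ und u v) ∨
      (dir v u ∧ ¬ dir u v ∧ ¬ und u v) ∨
      (und u v ∧ ¬ dir u v ∧ ¬ dir v u))
    (hnocyc : ¬ HasDirCycle dir und)
    (a b : V) (hab : a ≠ b) (hund : und a b)
    (c : V) (hca : c ≠ a) (hcb : c ≠ b) :
    (dir a c ↔ dir b c) ∧ (dir c a ↔ dir c b) ∧ (und a c ↔ und b c) := by
  have hund' := und_symm_of_complete hcomplete hab hund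
  have hout : dir a c ↔ dir b c :=
    ⟨dir_out_of_und hcomplete hnocyc hab hca hcb hund,
      dir_out_of_und hcomplete hnocyc hab.symm hcb hca hund'⟩
  have hin : dir c a ↔ dir c b :=
    ⟨dir_in_of_und hcomplete hnocyc hab hca hcb hund,
      dir_in_of_und hcomplete hnocyc hab.symm hcb hca hund'⟩
  have hac := hcomplete a c hca.symm
  have hbc := hcomplete b c hcb.symm
  exact ⟨hout, hin, by tauto⟩

/-- In a complete mixed graph with no directed cycle, two vertices joined by an
undirected edge have the same edge type towards any third vertex. -/
theorem undirected_edge_same_type {V : Type*} [Fintype V]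
    (dir und : V → V → Prop)
    (hundsymm : ∀ u v, und u v → und v u)
    (hcomplete : ∀ u v : V, u ≠ v →
      (dir u v ∧ ¬ dir v u ∧ ¬ und u v) ∨
      (dir v u ∧ ¬ dir u v ∧ ¬ und u v) ∨
      (und u v ∧ ¬ dir u v ∧ ¬ dir v u))
    (hnocyc : ¬ HasDirCycle dir und)
    (a b : V) (hab : a ≠ b) (hund : und a b)
    (c : V) (hca : c ≠ a) (hcb : c ≠ b) :
    (dir a c ↔ dir b c) ∧ (dir c a ↔ dir c b) ∧ (und a c ↔ und b c) :=
  undirected_edge_same_type_general dir und hcomplete hnocyc a b hab hund c hca hcb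
end

section
/- Let X be a finite set with |X| ≥ 2, and let R be a relation set on the unordered pairs of distinct points of X (assigning <, =, or > to each two pairs) whose auxiliary mixed graph contains no directed cycle. Then there exists a metric ρ on X that generates R. -/
open Finset

theorem hasDirCycle_of_triangle_s6 {V : Type*} {dir und : V → V → Prop} {a b c : V}
    (hab : a ≠ b) (hbc : b ≠ c) (hac : a ≠ c) (h₁ : dir a b)
    (h₂ : dir b c ∨ und b c) (h₃ : dir c a ∨ und c a) : HasDirCycle dir und := by
  refine ⟨3, le_rfl, ![a, b, c], ?_, ?_, ⟨0, h₁⟩⟩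
  · intro i j hij
    fin_cases i <;> fin_cases j <;> simp_all <;> rfl
  · intro i
    fin_cases i
    exacts [Or.inl h₁, h₂, h₃]

theorem Ordering.eq_gt_or_eq_eq_of_ne_lt {o : Ordering} (h : o ≠ .lt) : o = .gt ∨ o = .eq := by
  cases o <;> simp_all

section TotalPreorder

variable {V : Type*} {R : V → V → Ordering}

theorem refl_eq_of_swap (hswap : ∀ v w, R w v = (R v w).swap) (v : V) : R v v = .eq := by
  have := hswap v v
  cases h : R v v <;> simp [h, Ordering.swap] at this ⊢

theorem not_gt_trans_of_not_hasDirCycle (hswap : ∀ v w, R w v = (R v w).swap)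
    (hnocyc : ¬ HasDirCycle (fun v w => R v w = .gt) (fun v w => v ≠ w ∧ R v w = .eq))
    {a b c : V} (hab : R a b ≠ .gt) (hbc : R b c ≠ .gt) : R a c ≠ .gt := by
  intro hac
  have hac' : a ≠ c := by rintro rfl; simp [refl_eq_of_swap hswap] at hac
  have hab' : a ≠ b := by rintro rfl; exact hbc hac
  have hbc' : b ≠ c := by rintro rfl; exact hab hac
  have hcb : R c b = .gt ∨ R c b = .eq :=
    Ordering.eq_gt_or_eq_eq_of_ne_lt (by rwa [hswap, Ne, Ordering.swap_eq_lt])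
  have hba : R b a = .gt ∨ R b a = .eq :=
    Ordering.eq_gt_or_eq_eq_of_ne_lt (by rwa [hswap, Ne, Ordering.swap_eq_lt])
  refine hnocyc (hasDirCycle_of_triangle_s6 hac' hbc'.symm hab' hac ?_ ?_)
  · exact hcb.imp_right fun h => ⟨hbc'.symm, h⟩
  · exact hba.imp_right fun h => ⟨hab'.symm, h⟩

variable [Fintype V]

def rankBelow (R : V → V → Ordering) (v : V) : ℕ :=
  #{u | R v u = .gt}

theorem rankBelow_le_of_not_gt
    (htrans : ∀ a b c : V, R a b ≠ .gt → R b c ≠ .gt → R a c ≠ .gt) {v w : V}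
    (h : R v w ≠ .gt) : rankBelow R v ≤ rankBelow R w := by
  classical
  refine card_le_card fun u hu => ?_
  simp only [mem_filter, mem_univ, true_and] at hu ⊢
  by_contra hwu
  exact htrans _ _ _ h hwu hu

variable (hswap : ∀ v w, R w v = (R v w).swap)
  (htrans : ∀ a b c : V, R a b ≠ .gt → R b c ≠ .gt → R a c ≠ .gt)
include hswap htrans

theorem rankBelow_lt_of_gt {v w : V} (h : R v w = .gt) : rankBelow R w < rankBelow R v := by
  classical
  refine card_lt_card ⟨fun u hu => ?_, fun hsub => ?_⟩
  · simp only [mem_filter, mem_univ, true_and] at hu ⊢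
    by_contra hvu
    refine htrans _ _ _ ?_ hvu hu
    rw [hswap, h]
    decide
  · simpa [refl_eq_of_swap hswap] using hsub (by simpa using h : w ∈ ({u | R v u = .gt} : Finset V))

theorem compare_rankBelow (v w : V) : compare (rankBelow R v) (rankBelow R w) = R v w := by
  cases h : R v w
  · have : R w v = .gt := by rw [hswap, h]; rfl
    exact compare_lt_iff_lt.mpr (rankBelow_lt_of_gt hswap htrans this)
  · have hwv : R w v = .eq := by rw [hswap, h]; rfl
    exact compare_eq_iff_eq.mpr <| le_antisymm
      (rankBelow_le_of_not_gt htrans (by rw [h]; decide))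
      (rankBelow_le_of_not_gt htrans (by rw [hwv]; decide))
  · exact compare_gt_iff_gt.mpr (rankBelow_lt_of_gt hswap htrans h)

end TotalPreorder

theorem triangle_of_offDiag_mem_Icc_one_two {X : Type*} {ρ : X → X → ℝ}
    (hdiag : ∀ x, ρ x x = 0) (hoff : ∀ x y, x ≠ y → ρ x y ∈ Set.Icc 1 2) (x y z : X) :
    ρ x z ≤ ρ x y + ρ y z := by
  rcases eq_or_ne x y with rfl | hxy
  · simp [hdiag]
  rcases eq_or_ne y z with rfl | hyz
  · simp [hdiag]
  rcases eq_or_ne x z with rfl | hxz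
  · linarith [(hoff x y hxy).1, (hoff y x hyz).1, hdiag x]
  linarith [(hoff x y hxy).1, (hoff y z hyz).1, (hoff x z hxz).2]

theorem strictMono_two_sub_inv_succ : StrictMono fun n : ℕ => (2 - 1 / (n + 1) : ℝ) := by
  intro m n h
  have : (m + 1 : ℝ) < n + 1 := by exact_mod_cast Nat.succ_lt_succ h
  simpa using one_div_lt_one_div_of_lt (by positivity) this

theorem two_sub_inv_succ_mem_Icc (n : ℕ) : (2 - 1 / (n + 1) : ℝ) ∈ Set.Icc 1 2 := by
  have h₀ : (0 : ℝ) ≤ 1 / (n + 1) := by positivity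
  have h₁ : (1 / (n + 1) : ℝ) ≤ 1 := div_le_one_of_le₀ (by simp) (by positivity)
  constructor <;> linarith

theorem no_directed_cycle_gives_generating_metric_general {X : Type*} [Fintype X]
    (R : Sym2 X → Sym2 X → Ordering)
    (hswap : ∀ v w : Sym2 X, R w v = (R v w).swap)
    (hnocyc : ¬ HasDirCycle (V := {e : Sym2 X // ¬ e.IsDiag})
      (fun v w => R v.1 w.1 = Ordering.gt)
      (fun v w => v ≠ w ∧ R v.1 w.1 = Ordering.eq)) :
    ∃ ρ : X → X → ℝ,
      (∀ x y, ρ x y = ρ y x) ∧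
      (∀ x y, ρ x y = 0 ↔ x = y) ∧
      (∀ x y z, ρ x z ≤ ρ x y + ρ y z) ∧
      (∀ p q r s : X, p ≠ q → r ≠ s →
        R s(p, q) s(r, s) = compare (ρ p q) (ρ r s)) := by
  classical
  let R' (v w : {e : Sym2 X // ¬ e.IsDiag}) : Ordering := R v.1 w.1
  have hswap' : ∀ v w, R' w v = (R' v w).swap := fun v w => hswap v.1 w.1
  have htrans : ∀ a b c, R' a b ≠ .gt → R' b c ≠ .gt → R' a c ≠ .gt :=
    fun _ _ _ => not_gt_trans_of_not_hasDirCycle hswap' hnocyc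
  let φ (n : ℕ) : ℝ := 2 - 1 / (n + 1)
  let d (e : Sym2 X) : ℝ := if h : e.IsDiag then 0 else φ (rankBelow R' ⟨e, h⟩)
  have hdiag : ∀ x, d s(x, x) = 0 := fun x => dif_pos (Sym2.mk_isDiag_iff.mpr rfl)
  have hoff : ∀ x y (h : x ≠ y),
      d s(x, y) = φ (rankBelow R' ⟨s(x, y), Sym2.mk_isDiag_iff.not.mpr h⟩) :=
    fun x y h => dif_neg (Sym2.mk_isDiag_iff.not.mpr h)
  have hmem : ∀ x y, x ≠ y → d s(x, y) ∈ Set.Icc 1 2 := fun x y h =>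
    hoff x y h ▸ two_sub_inv_succ_mem_Icc _
  refine ⟨fun x y => d s(x, y), fun x y => congrArg d Sym2.eq_swap,
    fun x y => ⟨fun h => by_contra fun hxy => by linarith [(hmem x y hxy).1], (· ▸ hdiag x)⟩,
    triangle_of_offDiag_mem_Icc_one_two hdiag hmem, fun p q r s hpq hrs => ?_⟩
  show R s(p, q) s(r, s) = compare (d s(p, q)) (d s(r, s))
  rw [hoff p q hpq, hoff r s hrs, ← cmp_eq_compare, strictMono_two_sub_inv_succ.cmp_map_eq,
    cmp_eq_compare, compare_rankBelow hswap' htrans]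

/-- If a relation set `R` on the unordered pairs of distinct points of a finite
set `X` (with exactly one of `<`, `=`, `>` between any two pairs) has an
auxiliary mixed graph with no directed cycle, then there is a metric `ρ` on `X`
generating `R`. -/
theorem no_directed_cycle_gives_generating_metric {X : Type*} [Fintype X]
    (hcard : 2 ≤ Fintype.card X)
    (R : Sym2 X → Sym2 X → Ordering)
    (hswap : ∀ v w : Sym2 X, R w v = (R v w).swap)
    (hnocyc : ¬ HasDirCycle (V := {e : Sym2 X // ¬ e.IsDiag})
      (fun v w => R v.1 w.1 = Ordering.gt)
      (fun v w => v ≠ w ∧ R v.1 w.1 = Ordering.eq)) :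
    ∃ ρ : X → X → ℝ,
      (∀ x y, ρ x y = ρ y x) ∧
      (∀ x y, ρ x y = 0 ↔ x = y) ∧
      (∀ x y z, ρ x z ≤ ρ x y + ρ y z) ∧
      (∀ p q r s : X, p ≠ q → r ≠ s →
        R s(p, q) s(r, s) = compare (ρ p q) (ρ r s)) :=
  no_directed_cycle_gives_generating_metric_general R hswap hnocyc
end
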